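/- arXiv:1801.05923 — 5 statements merged into one kernel-verified Lean document; each statement's English description precedes it below -/
import Mathlib

section
/- Let p, q ∈ ℝ² be points of two-dimensional Minkowski spacetime with q − p future-timelike, i.e. q.t − p.t > |q.x − p.x|, and let z ∈ ℝ² be any point with z ≠ p and z ≠ q. Then there exists a future-directed timelike curve γ : [0,1] → ℝ² with γ(0) = p, γ(1) = q, whose image does not contain z. -/
open Set Filter

/-- A future-directed timelike curve `γ : [0,1] → ℝ²` (with coordinates `(t, x)`),
given together with its derivative `γ'`: `γ` is differentiable on `[0,1]` and the
derivative `γ' s = (t'(s), x'(s))` satisfies `t'(s) > |x'(s)|` for every `s ∈ [0,1]`. -/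
def IsFDTimelike (γ γ' : ℝ → ℝ × ℝ) : Prop :=
  ∀ s ∈ Set.Icc (0:ℝ) 1,
    HasDerivWithinAt γ (γ' s) (Set.Icc (0:ℝ) 1) s ∧ |(γ' s).2| < (γ' s).1

/-- A future-directed causal curve `γ : [0,1] → ℝ²`, given together with its
derivative `γ'`: `γ` is differentiable on `[0,1]` and the derivative
`γ' s = (t'(s), x'(s))` satisfies `t'(s) ≥ |x'(s)|` and `γ' s ≠ 0` for every `s ∈ [0,1]`. -/
def IsFDCausal (γ γ' : ℝ → ℝ × ℝ) : Prop :=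
  ∀ s ∈ Set.Icc (0:ℝ) 1,
    HasDerivWithinAt γ (γ' s) (Set.Icc (0:ℝ) 1) s ∧ |(γ' s).2| ≤ (γ' s).1 ∧ γ' s ≠ 0

/-- The chronological future of `p` relative to `M ⊆ ℝ²`: points of `M` joined to `p`
by a future-directed timelike curve whose image lies in `M`. -/
def Iplus (M : Set (ℝ × ℝ)) (p : ℝ × ℝ) : Set (ℝ × ℝ) :=
  {q | q ∈ M ∧ ∃ γ γ' : ℝ → ℝ × ℝ, IsFDTimelike γ γ' ∧ γ 0 = p ∧ γ 1 = q ∧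
    ∀ s ∈ Set.Icc (0:ℝ) 1, γ s ∈ M}

/-- The chronological past of `p` relative to `M ⊆ ℝ²`. -/
def Iminus (M : Set (ℝ × ℝ)) (p : ℝ × ℝ) : Set (ℝ × ℝ) :=
  {q | q ∈ M ∧ ∃ γ γ' : ℝ → ℝ × ℝ, IsFDTimelike γ γ' ∧ γ 0 = q ∧ γ 1 = p ∧
    ∀ s ∈ Set.Icc (0:ℝ) 1, γ s ∈ M}

/-- The causal future of `p` relative to `M ⊆ ℝ²`: `{p}` together with the points of `M`
joined to `p` by a future-directed causal curve whose image lies in `M`. -/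
def Jplus (M : Set (ℝ × ℝ)) (p : ℝ × ℝ) : Set (ℝ × ℝ) :=
  {p} ∪ {q | q ∈ M ∧ ∃ γ γ' : ℝ → ℝ × ℝ, IsFDCausal γ γ' ∧ γ 0 = p ∧ γ 1 = q ∧
    ∀ s ∈ Set.Icc (0:ℝ) 1, γ s ∈ M}

/-- Two-dimensional Minkowski spacetime with the point `(0,0)` removed. -/
def Mdel : Set (ℝ × ℝ) := {((0:ℝ), (0:ℝ))}ᶜ

/-- Auxiliary: the bent curve with parameter `ε` is future-directed timelike. -/
lemma curve_good (p q : ℝ × ℝ) (htl : q.1 - p.1 > |q.2 - p.2|) (ε : ℝ)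
    (hε : |ε| ≤ (q.1 - p.1 - |q.2 - p.2|)/2) :
    IsFDTimelike
      (fun s => (p.1 + s*(q.1-p.1), p.2 + s*(q.2-p.2) + ε*(s*(1-s))))
      (fun s => (q.1-p.1, (q.2-p.2) + ε*(1-2*s))) := by
  intro s hs
  constructor
  · apply HasDerivAt.hasDerivWithinAt
    apply HasDerivAt.prodMk
    · have h := ((hasDerivAt_id s).mul_const (q.1-p.1)).const_add p.1
      simpa using h
    · have h2 : HasDerivAt (fun s : ℝ => s*(1-s)) (1-2*s) s := by
        have h := (hasDerivAt_id s).mul ((hasDerivAt_const s (1:ℝ)).sub (hasDerivAt_id s))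
        convert h using 1 <;> (try rfl) <;> (try funext x) <;> (try simp only [id_eq, Pi.mul_apply, Pi.add_apply, Pi.sub_apply]) <;> ring
      have h := (((hasDerivAt_id s).mul_const (q.2-p.2)).const_add p.2).add
        (h2.const_mul ε)
      convert h using 1 <;> (try funext x) <;> (try simp only [id_eq, Pi.add_apply, Pi.sub_apply]) <;> ring
  · have h1 : |1-2*s| ≤ 1 := by
      rw [abs_le]; constructor <;> [linarith [hs.2]; linarith [hs.1]]
    have h2 : |(q.2-p.2) + ε*(1-2*s)| ≤ |q.2-p.2| + |ε| * |1-2*s| := by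
      calc |(q.2-p.2) + ε*(1-2*s)| ≤ |q.2-p.2| + |ε*(1-2*s)| := abs_add_le _ _
        _ = |q.2-p.2| + |ε| * |1-2*s| := by rw [abs_mul]
    have h3 : |ε| * |1-2*s| ≤ |ε| * 1 := mul_le_mul_of_nonneg_left h1 (abs_nonneg ε)
    simp only []
    nlinarith [abs_nonneg (q.2-p.2)]

/-- if `q − p` is future-timelike and `z ≠ p`, `z ≠ q`, then there is a
future-directed timelike curve from `p` to `q` whose image avoids `z`. -/
theorem stmt4 (p q z : ℝ × ℝ) (htl : q.1 - p.1 > |q.2 - p.2|)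
    (hzp : z ≠ p) (hzq : z ≠ q) :
    ∃ γ γ' : ℝ → ℝ × ℝ, IsFDTimelike γ γ' ∧ γ 0 = p ∧ γ 1 = q ∧
      ∀ s ∈ Set.Icc (0:ℝ) 1, γ s ≠ z := by
  set a := q.1 - p.1 with ha
  set b := q.2 - p.2 with hb
  have hapos : 0 < a := lt_of_le_of_lt (abs_nonneg _) htl
  set δ := (a - |b|)/2 with hδ
  have hδpos : 0 < δ := by
    have : |b| < a := htl
    simp only [hδ]; linarith
  have endpts : ∀ ε : ℝ,
      ((p.1 + (0:ℝ)*a, p.2 + (0:ℝ)*b + ε*((0:ℝ)*(1-(0:ℝ)))) = p) ∧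
      ((p.1 + (1:ℝ)*a, p.2 + (1:ℝ)*b + ε*((1:ℝ)*(1-(1:ℝ)))) = q) := by
    intro ε
    constructor
    · simp
    · simp only [Prod.ext_iff, ha, hb]
      constructor <;> ring
  have hit : ∀ ε : ℝ, ∀ s ∈ Set.Icc (0:ℝ) 1,
      (p.1 + s*a, p.2 + s*b + ε*(s*(1-s))) = z →
      s ∈ Set.Ioo (0:ℝ) 1 ∧ p.1 + s*a = z.1 ∧ p.2 + s*b + ε*(s*(1-s)) = z.2 := by
    intro ε s hs heq
    have h1 : p.1 + s*a = z.1 := congrArg Prod.fst heq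
    have h2 : p.2 + s*b + ε*(s*(1-s)) = z.2 := congrArg Prod.snd heq
    refine ⟨⟨?_, ?_⟩, h1, h2⟩
    · rcases lt_or_eq_of_le hs.1 with h | h
      · exact h
      · exfalso; apply hzp
        rw [← heq, ← h]
        simp
    · rcases lt_or_eq_of_le hs.2 with h | h
      · exact h
      · exfalso; apply hzq
        rw [← heq, h]
        simp only [Prod.ext_iff, ha, hb]
        constructor <;> ring
  have habs1 : |δ/2| ≤ δ := by rw [abs_of_pos (by linarith)]; linarith
  have habs2 : |δ/3| ≤ δ := by rw [abs_of_pos (by linarith)]; linarith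
  by_cases hcase : ∀ s ∈ Set.Icc (0:ℝ) 1,
      (p.1 + s*a, p.2 + s*b + (δ/2)*(s*(1-s))) ≠ z
  · exact ⟨_, _, curve_good p q htl (δ/2) (by rw [← hδ]; exact habs1),
      (endpts (δ/2)).1, (endpts (δ/2)).2, hcase⟩
  · push_neg at hcase
    obtain ⟨s₁, hs₁, heq₁⟩ := hcase
    obtain ⟨hs₁o, ht₁, hx₁⟩ := hit (δ/2) s₁ hs₁ heq₁
    refine ⟨_, _, curve_good p q htl (δ/3) (by rw [← hδ]; exact habs2),
      (endpts (δ/3)).1, (endpts (δ/3)).2, ?_⟩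
    intro s hs heq
    obtain ⟨hso, ht, hx⟩ := hit (δ/3) s hs heq
    have hss : s = s₁ := by
      have h4 : s*a = s₁*a := by linarith [ht, ht₁]
      exact mul_right_cancel₀ (ne_of_gt hapos) h4
    subst hss
    have hc : 0 < s*(1-s) := mul_pos hso.1 (by linarith [hso.2])
    nlinarith [hx, hx₁]
end

section
/- Let M = ℝ² \ {(0,0)} be two-dimensional Minkowski spacetime with a point removed. For all points p, q, r ∈ M: if q ∈ J⁺_M(p) and r ∈ I⁺_M(q), then r ∈ I⁺_M(p). -/
open Set Filter

-- component derivatives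
lemma comp_deriv {γ : ℝ → ℝ × ℝ} {v : ℝ × ℝ} {s : ℝ} {S : Set ℝ}
    (h : HasDerivWithinAt γ v S s) (ε : ℝ) :
    HasDerivWithinAt (fun u => (γ u).1 + ε * (γ u).2) (v.1 + ε * v.2) S s := by
  have h1 : HasDerivWithinAt (fun u => (γ u).1) v.1 S s :=
    (ContinuousLinearMap.fst ℝ ℝ ℝ).hasFDerivAt.comp_hasDerivWithinAt s h
  have h2 : HasDerivWithinAt (fun u => (γ u).2) v.2 S s :=
    (ContinuousLinearMap.snd ℝ ℝ ℝ).hasFDerivAt.comp_hasDerivWithinAt s h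
  exact h1.add (h2.const_mul ε)

lemma strict_ineq {γ γ' : ℝ → ℝ × ℝ}
    (h : ∀ s ∈ Set.Icc (0:ℝ) 1, HasDerivWithinAt γ (γ' s) (Set.Icc (0:ℝ) 1) s)
    (hpos : ∀ s ∈ Set.Icc (0:ℝ) 1, |(γ' s).2| < (γ' s).1) :
    |(γ 1).2 - (γ 0).2| < (γ 1).1 - (γ 0).1 := by
  have key : ∀ ε : ℝ, ε = 1 ∨ ε = -1 →
      (γ 0).1 + ε * (γ 0).2 < (γ 1).1 + ε * (γ 1).2 := by
    intro ε hε
    have hu : ∀ s ∈ Set.Icc (0:ℝ) 1,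
        HasDerivWithinAt (fun u => (γ u).1 + ε * (γ u).2) ((γ' s).1 + ε * (γ' s).2)
          (Set.Icc (0:ℝ) 1) s := fun s hs => comp_deriv (h s hs) ε
    have hsm : StrictMonoOn (fun u => (γ u).1 + ε * (γ u).2) (Set.Icc (0:ℝ) 1) := by
      apply strictMonoOn_of_hasDerivWithinAt_pos (f' := fun s => (γ' s).1 + ε * (γ' s).2)
        (convex_Icc 0 1) (fun s hs => (hu s hs).continuousWithinAt)
      · intro x hx
        exact (hu x (interior_subset hx)).mono interior_subset
      · intro x hx
        have := hpos x (interior_subset hx)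
        have h2 := abs_lt.mp this
        rcases hε with rfl | rfl <;> nlinarith [h2.1, h2.2]
    exact hsm (Set.left_mem_Icc.mpr zero_le_one) (Set.right_mem_Icc.mpr zero_le_one) one_pos
  have k1 := key 1 (Or.inl rfl)
  have k2 := key (-1) (Or.inr rfl)
  rw [abs_lt]; constructor <;> nlinarith

lemma causal_ineq {γ γ' : ℝ → ℝ × ℝ}
    (h : ∀ s ∈ Set.Icc (0:ℝ) 1, HasDerivWithinAt γ (γ' s) (Set.Icc (0:ℝ) 1) s)
    (hpos : ∀ s ∈ Set.Icc (0:ℝ) 1, |(γ' s).2| ≤ (γ' s).1) :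
    |(γ 1).2 - (γ 0).2| ≤ (γ 1).1 - (γ 0).1 := by
  have key : ∀ ε : ℝ, ε = 1 ∨ ε = -1 →
      (γ 0).1 + ε * (γ 0).2 ≤ (γ 1).1 + ε * (γ 1).2 := by
    intro ε hε
    have hu : ∀ s ∈ Set.Icc (0:ℝ) 1,
        HasDerivWithinAt (fun u => (γ u).1 + ε * (γ u).2) ((γ' s).1 + ε * (γ' s).2)
          (Set.Icc (0:ℝ) 1) s := fun s hs => comp_deriv (h s hs) ε
    have hmo : MonotoneOn (fun u => (γ u).1 + ε * (γ u).2) (Set.Icc (0:ℝ) 1) := by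
      apply monotoneOn_of_deriv_nonneg (convex_Icc 0 1)
        (fun s hs => (hu s hs).continuousWithinAt)
      · intro x hx
        exact ((hu x (interior_subset hx)).mono interior_subset).differentiableWithinAt
      · intro x hx
        rw [interior_Icc] at hx
        have hD := (hu x ⟨hx.1.le, hx.2.le⟩).hasDerivAt (Icc_mem_nhds hx.1 hx.2)
        rw [hD.deriv]
        have := hpos x ⟨hx.1.le, hx.2.le⟩
        have h2 := abs_le.mp this
        rcases hε with rfl | rfl <;> nlinarith [h2.1, h2.2]
    exact hmo (Set.left_mem_Icc.mpr zero_le_one) (Set.right_mem_Icc.mpr zero_le_one) zero_le_one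
  have k1 := key 1 (Or.inl rfl)
  have k2 := key (-1) (Or.inr rfl)
  rw [abs_le]; constructor <;> nlinarith

/-- The Bézier-type curve used to join `p` to `r`. -/
noncomputable def bez (p r : ℝ × ℝ) (y s : ℝ) : ℝ × ℝ :=
  (p.1 + (r.1 - p.1) * s, p.2 + 2*(y - p.2)*s + (p.2 - 2*y + r.2)*s^2)

noncomputable def bez' (p r : ℝ × ℝ) (y s : ℝ) : ℝ × ℝ :=
  (r.1 - p.1, 2*(y - p.2) + 2*(p.2 - 2*y + r.2)*s)

lemma bez_hasDeriv (p r : ℝ × ℝ) (y s : ℝ) :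
    HasDerivAt (fun u => bez p r y u) (bez' p r y s) s := by
  have h1 : HasDerivAt (fun u : ℝ => p.1 + (r.1 - p.1) * u) (r.1 - p.1) s := by
    simpa using ((hasDerivAt_id s).const_mul (r.1 - p.1)).const_add p.1
  have h2 : HasDerivAt (fun u : ℝ => p.2 + 2*(y - p.2)*u + (p.2 - 2*y + r.2)*u^2)
      (2*(y - p.2) + 2*(p.2 - 2*y + r.2)*s) s := by
    have ha : HasDerivAt (fun u : ℝ => 2*(y - p.2)*u) (2*(y - p.2)) s := by
      simpa using (hasDerivAt_id s).const_mul (2*(y - p.2))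
    have hb : HasDerivAt (fun u : ℝ => (p.2 - 2*y + r.2)*u^2) ((p.2 - 2*y + r.2)*(2*s)) s := by
      simpa using (hasDerivAt_pow 2 s).const_mul (p.2 - 2*y + r.2)
    have := (ha.const_add p.2).add hb
    refine this.congr_deriv ?_
    ring
  exact h1.prodMk h2

lemma bez_zero (p r : ℝ × ℝ) (y : ℝ) : bez p r y 0 = p := by
  simp [bez]

lemma bez_one (p r : ℝ × ℝ) (y : ℝ) : bez p r y 1 = r := by
  simp only [bez]
  ext <;> simp <;> ring

lemma bez_timelike (p r : ℝ × ℝ) (y : ℝ) (ha : 0 < r.1 - p.1)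
    (hy1 : |y - p.2| < (r.1 - p.1)/2) (hy2 : |r.2 - y| < (r.1 - p.1)/2)
    {s : ℝ} (hs : s ∈ Set.Icc (0:ℝ) 1) :
    |(bez' p r y s).2| < (bez' p r y s).1 := by
  obtain ⟨hs0, hs1⟩ := hs
  set a := r.1 - p.1 with hadef
  have hu := abs_lt.mp hy1
  have hv := abs_lt.mp hy2
  have hrw : (bez' p r y s).2 = 2*((1-s)*(y - p.2) + s*(r.2 - y)) := by
    simp only [bez']; ring
  have hfst : (bez' p r y s).1 = a := rfl
  rw [hrw, hfst, abs_lt]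
  rcases eq_or_lt_of_le hs0 with h0 | h0
  · constructor <;> nlinarith
  · constructor <;> nlinarith [mul_pos h0 (show (0:ℝ) < a/2 - (r.2 - y) by linarith),
      mul_pos h0 (show (0:ℝ) < a/2 + (r.2 - y) by linarith),
      mul_nonneg (show (0:ℝ) ≤ 1 - s by linarith) (show (0:ℝ) ≤ a/2 - (y - p.2) by linarith),
      mul_nonneg (show (0:ℝ) ≤ 1 - s by linarith) (show (0:ℝ) ≤ a/2 + (y - p.2) by linarith)]

lemma bez_bad_unique (p r : ℝ × ℝ) (hp : p ≠ ((0:ℝ),(0:ℝ))) (hr : r ≠ ((0:ℝ),(0:ℝ)))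
    (ha : 0 < r.1 - p.1) {y₁ y₂ : ℝ} (hne : y₁ ≠ y₂)
    (h1 : ∃ s ∈ Set.Icc (0:ℝ) 1, bez p r y₁ s = ((0:ℝ),(0:ℝ)))
    (h2 : ∃ s ∈ Set.Icc (0:ℝ) 1, bez p r y₂ s = ((0:ℝ),(0:ℝ))) : False := by
  obtain ⟨s₁, hs₁, hb₁⟩ := h1
  obtain ⟨s₂, hs₂, hb₂⟩ := h2
  have e₁ := congrArg Prod.fst hb₁
  have e₂ := congrArg Prod.fst hb₂
  simp only [bez] at e₁ e₂
  have hss : s₁ = s₂ := by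
    have : (r.1 - p.1) * (s₁ - s₂) = 0 := by linarith
    rcases mul_eq_zero.mp this with h | h
    · linarith
    · linarith
  subst hss
  have f₁ := congrArg Prod.snd hb₁
  have f₂ := congrArg Prod.snd hb₂
  simp only [bez] at f₁ f₂
  have key : (y₁ - y₂) * (s₁ * (1 - s₁)) = 0 := by nlinarith
  rcases mul_eq_zero.mp key with h | h
  · exact hne (by linarith)
  · rcases mul_eq_zero.mp h with h | h
    · subst h
      exact hp (by rw [← bez_zero p r y₁]; exact hb₁)
    · have : s₁ = 1 := by linarith
      subst this
      exact hr (by rw [← bez_one p r y₁]; exact hb₁)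

lemma reach (p r : ℝ × ℝ) (hp : p ≠ ((0:ℝ),(0:ℝ))) (hr : r ≠ ((0:ℝ),(0:ℝ)))
    (hcone : |r.2 - p.2| < r.1 - p.1) :
    ∃ γ γ' : ℝ → ℝ × ℝ, IsFDTimelike γ γ' ∧ γ 0 = p ∧ γ 1 = r ∧
      ∀ s ∈ Set.Icc (0:ℝ) 1, γ s ≠ ((0:ℝ),(0:ℝ)) := by
  set a := r.1 - p.1 with hadef
  have ha : 0 < a := lt_of_le_of_lt (abs_nonneg _) hcone
  have habs := abs_lt.mp hcone
  set lo := max (p.2 - a/2) (r.2 - a/2) with hlo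
  set hi := min (p.2 + a/2) (r.2 + a/2) with hhi
  have hlohi : lo < hi := by
    rw [hlo, hhi]
    apply max_lt <;> apply lt_min <;> linarith
  have hok : ∀ y, lo < y → y < hi → |y - p.2| < a/2 ∧ |r.2 - y| < a/2 := by
    intro y hy1 hy2
    rw [hlo] at hy1; rw [hhi] at hy2
    have l1 := le_max_left (p.2 - a/2) (r.2 - a/2)
    have l2 := le_max_right (p.2 - a/2) (r.2 - a/2)
    have m1 := min_le_left (p.2 + a/2) (r.2 + a/2)
    have m2 := min_le_right (p.2 + a/2) (r.2 + a/2)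
    constructor <;> rw [abs_lt] <;> constructor <;> linarith
  set y₁ := lo + (hi - lo)/3 with hy₁
  set y₂ := lo + 2*(hi - lo)/3 with hy₂
  have hne : y₁ ≠ y₂ := by rw [hy₁, hy₂]; intro h; nlinarith
  have use_y : ∀ y, lo < y → y < hi →
      (∀ s ∈ Set.Icc (0:ℝ) 1, bez p r y s ≠ ((0:ℝ),(0:ℝ))) →
      ∃ γ γ' : ℝ → ℝ × ℝ, IsFDTimelike γ γ' ∧ γ 0 = p ∧ γ 1 = r ∧
        ∀ s ∈ Set.Icc (0:ℝ) 1, γ s ≠ ((0:ℝ),(0:ℝ)) := by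
    intro y h1 h2 hgood
    obtain ⟨hb1, hb2⟩ := hok y h1 h2
    refine ⟨bez p r y, bez' p r y, ?_, bez_zero p r y, bez_one p r y, hgood⟩
    intro s hs
    exact ⟨(bez_hasDeriv p r y s).hasDerivWithinAt, bez_timelike p r y ha hb1 hb2 hs⟩
  by_cases hbad : ∃ s ∈ Set.Icc (0:ℝ) 1, bez p r y₁ s = ((0:ℝ),(0:ℝ))
  · refine use_y y₂ (by rw [hy₂]; linarith) (by rw [hy₂]; linarith) ?_
    intro s hs hzero
    exact bez_bad_unique p r hp hr ha hne hbad ⟨s, hs, hzero⟩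
  · refine use_y y₁ (by rw [hy₁]; linarith) (by rw [hy₁]; linarith) ?_
    intro s hs hzero
    exact hbad ⟨s, hs, hzero⟩

/-- in `M = ℝ² \ {(0,0)}`, if `q ∈ J⁺_M(p)` and `r ∈ I⁺_M(q)` then
`r ∈ I⁺_M(p)`. -/
theorem stmt7 (p q r : ℝ × ℝ) (hp : p ∈ Mdel) (hq : q ∈ Mdel) (hr : r ∈ Mdel)
    (hqJ : q ∈ Jplus Mdel p) (hrI : r ∈ Iplus Mdel q) :
    r ∈ Iplus Mdel p := by
  obtain ⟨hrM, γ₂, γ₂', hT, h20, h21, h2M⟩ := hrI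
  have hineq2 : |(γ₂ 1).2 - (γ₂ 0).2| < (γ₂ 1).1 - (γ₂ 0).1 :=
    strict_ineq (fun s hs => (hT s hs).1) (fun s hs => (hT s hs).2)
  rw [h20, h21] at hineq2
  rcases hqJ with hqp | ⟨hqM, γ₁, γ₁', hC, h10, h11, h1M⟩
  · -- q = p
    have : q = p := hqp
    subst this
    exact ⟨hrM, γ₂, γ₂', hT, h20, h21, h2M⟩
  · have hineq1 : |(γ₁ 1).2 - (γ₁ 0).2| ≤ (γ₁ 1).1 - (γ₁ 0).1 :=
      causal_ineq (fun s hs => (hC s hs).1) (fun s hs => (hC s hs).2.1)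
    rw [h10, h11] at hineq1
    have hcone : |r.2 - p.2| < r.1 - p.1 := by
      have a1 := abs_lt.mp hineq2
      have a2 := abs_le.mp hineq1
      rw [abs_lt]
      constructor <;> linarith [a1.1, a1.2, a2.1, a2.2]
    obtain ⟨γ, γ', hTg, hg0, hg1, hgM⟩ := reach p r hp hr hcone
    exact ⟨hr, γ, γ', hTg, hg0, hg1, fun s hs => hgM s hs⟩
end

section
/- Let M = ℝ² \ {(0,0)} be two-dimensional Minkowski spacetime with a point removed, equipped with the subspace topology. For every point p ∈ M, the closure of I⁺_M(p) in M equals the closure of J⁺_M(p) in M. -/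
open Set Filter

lemma mem_Mdel_iff {q : ℝ × ℝ} : q ∈ Mdel ↔ q ≠ 0 := by
  have : ((0,0) : ℝ × ℝ) = 0 := rfl
  simp [Mdel, this]

lemma mem_closure_Iplus (p q : ℝ × ℝ) (γ γ' : ℝ → ℝ × ℝ)
    (hγ : ∀ s ∈ Set.Icc (0:ℝ) 1,
      HasDerivWithinAt γ (γ' s) (Set.Icc (0:ℝ) 1) s ∧ |(γ' s).2| ≤ (γ' s).1)
    (h0 : γ 0 = p) (h1 : γ 1 = q) (hM : ∀ s ∈ Set.Icc (0:ℝ) 1, γ s ∈ Mdel) :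
    q ∈ closure (Iplus Mdel p) := by
  have hcont : ContinuousOn γ (Set.Icc (0:ℝ) 1) :=
    fun s hs => ((hγ s hs).1).continuousWithinAt
  obtain ⟨s₀, hs₀, hmin0⟩ := isCompact_Icc.exists_isMinOn (Set.nonempty_Icc.2 zero_le_one)
    hcont.norm
  have hmin : ∀ s ∈ Set.Icc (0:ℝ) 1, ‖γ s₀‖ ≤ ‖γ s‖ := fun s hs => hmin0 hs
  set δ : ℝ := ‖γ s₀‖ with hδ
  have hδpos : 0 < δ := by
    have := mem_Mdel_iff.1 (hM s₀ hs₀)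
    simpa [hδ, norm_pos_iff] using this
  rw [Metric.mem_closure_iff]
  intro ε hε
  set η : ℝ := min (δ/2) (ε/2) with hη
  have hηpos : 0 < η := lt_min (by linarith) (by linarith)
  have hηδ : η < δ := lt_of_le_of_lt (min_le_left _ _) (by linarith)
  have hηε : η < ε := lt_of_le_of_lt (min_le_right _ _) (by linarith)
  set γε : ℝ → ℝ × ℝ := fun s => γ s + s • ((η, 0) : ℝ × ℝ) with hγε
  have hnorm : ‖((η, 0) : ℝ × ℝ)‖ = η := by
    have : ‖((η, 0) : ℝ × ℝ)‖ = max ‖η‖ ‖(0:ℝ)‖ := rfl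
    rw [this]; simp [abs_of_pos hηpos, hηpos.le]
  have himg : ∀ s ∈ Set.Icc (0:ℝ) 1, γε s ∈ Mdel := by
    intro s hs
    rw [mem_Mdel_iff]
    intro hcontra
    have heq : γ s = -(s • ((η, 0) : ℝ × ℝ)) := eq_neg_of_add_eq_zero_left hcontra
    have hns : ‖γ s‖ = |s| * η := by rw [heq, norm_neg, norm_smul, hnorm]; rfl
    have : ‖γ s‖ ≤ η := by
      rw [hns, abs_of_nonneg hs.1]
      nlinarith [hs.2, hηpos.le]
    linarith [hmin s hs]
  refine ⟨q + (η, 0), ?_, ?_⟩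
  · refine ⟨?_, γε, fun s => γ' s + (η, 0), ?_, ?_, ?_, himg⟩
    · have := himg 1 (by constructor <;> norm_num)
      simpa [hγε, h1] using this
    · intro s hs
      refine ⟨?_, ?_⟩
      · have hd := ((hγ s hs).1).add ((hasDerivWithinAt_id s _).smul_const ((η, 0) : ℝ × ℝ))
        rw [one_smul] at hd
        exact hd
      · have := (hγ s hs).2
        simp only [Prod.snd_add, Prod.fst_add]
        calc |(γ' s).2 + (0:ℝ)| = |(γ' s).2| := by rw [add_zero]
        _ ≤ (γ' s).1 := this
        _ < (γ' s).1 + η := by linarith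
    · simp [hγε, h0]
    · simp [hγε, h1]
  · rw [dist_self_add_right, hnorm]; exact hηε

lemma Jplus_subset_closure (p : ℝ × ℝ) (hp : p ∈ Mdel) :
    Jplus Mdel p ⊆ closure (Iplus Mdel p) := by
  rintro q (rfl | ⟨hqM, γ, γ', hc, h0, h1, hM⟩)
  · exact mem_closure_Iplus q q (fun _ => q) (fun _ => 0)
      (fun s hs => ⟨hasDerivWithinAt_const _ _ _, by simp⟩) rfl rfl (fun s _ => hp)
  · exact mem_closure_Iplus p q γ γ'
      (fun s hs => ⟨(hc s hs).1, (hc s hs).2.1⟩) h0 h1 hM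

lemma Iplus_subset_Jplus (p : ℝ × ℝ) : Iplus Mdel p ⊆ Jplus Mdel p := by
  rintro q ⟨hqM, γ, γ', ht, h0, h1, hM⟩
  right
  refine ⟨hqM, γ, γ', fun s hs => ⟨(ht s hs).1, (ht s hs).2.le, ?_⟩, h0, h1, hM⟩
  intro hz
  have h2 := (ht s hs).2
  rw [hz] at h2
  simp at h2

lemma closure_eq (p : ℝ × ℝ) (hp : p ∈ Mdel) :
    closure (Iplus Mdel p) = closure (Jplus Mdel p) :=
  subset_antisymm (closure_mono (Iplus_subset_Jplus p))
    (closure_minimal (Jplus_subset_closure p hp) isClosed_closure)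

/-- in `M = ℝ² \ {(0,0)}` with the subspace topology, the closure of
`I⁺_M(p)` in `M` equals the closure of `J⁺_M(p)` in `M`. -/
theorem stmt8 (p : ℝ × ℝ) (hp : p ∈ Mdel) :
    closure {x : Mdel | (x : ℝ × ℝ) ∈ Iplus Mdel p} =
      closure {x : Mdel | (x : ℝ × ℝ) ∈ Jplus Mdel p} := by
  have hI : Subtype.val '' {x : Mdel | (x : ℝ × ℝ) ∈ Iplus Mdel p} = Iplus Mdel p := by
    ext y
    simp only [Set.mem_image, Set.mem_setOf_eq, Subtype.exists, exists_and_right,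
      exists_eq_right]
    exact ⟨fun ⟨_, hy⟩ => hy, fun hy => ⟨hy.1, hy⟩⟩
  have hJ : Subtype.val '' {x : Mdel | (x : ℝ × ℝ) ∈ Jplus Mdel p} = Jplus Mdel p := by
    ext y
    simp only [Set.mem_image, Set.mem_setOf_eq, Subtype.exists, exists_and_right,
      exists_eq_right]
    refine ⟨fun ⟨_, hy⟩ => hy, fun hy => ⟨?_, hy⟩⟩
    rcases hy with rfl | hy
    · exact hp
    · exact hy.1
  ext x
  rw [closure_subtype, closure_subtype, hI, hJ, closure_eq p hp]
end

section
/- Let M = ℝ² \ {(0,0)} be two-dimensional Minkowski spacetime with a point removed. For all points p, q ∈ M: q ∈ I⁺_M(p) if and only if q.t − p.t > |q.x − p.x|. In particular, I⁺_M(p) = I⁺(p) ∩ M, where I⁺(p) is the chronological future of p in full Minkowski spacetime ℝ². -/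
open Set Filter

/-- Any timelike curve increases `t ± x` strictly: key inequality. -/
lemma timelike_ineq {γ γ' : ℝ → ℝ × ℝ} (h : IsFDTimelike γ γ') :
    (γ 1).1 - (γ 0).1 > |(γ 1).2 - (γ 0).2| := by
  have h0 : (0:ℝ) ∈ Set.Icc (0:ℝ) 1 := by norm_num
  have h1 : (1:ℝ) ∈ Set.Icc (0:ℝ) 1 := by norm_num
  have hconv : Convex ℝ (Set.Icc (0:ℝ) 1) := convex_Icc 0 1
  have hcont : ContinuousOn γ (Set.Icc (0:ℝ) 1) :=
    fun s hs => ((h s hs).1).continuousWithinAt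
  have hmono : ∀ (c : ℝ), |c| ≤ 1 →
      StrictMonoOn (fun s => (γ s).1 + c * (γ s).2) (Set.Icc (0:ℝ) 1) := by
    intro c hc
    apply strictMonoOn_of_hasDerivWithinAt_pos hconv
      (f' := fun s => (γ' s).1 + c * (γ' s).2)
    · exact fun s hs => (hcont s hs).fst.add ((hcont s hs).snd.const_smul c)
    · intro x hx
      have hx' : x ∈ Set.Icc (0:ℝ) 1 := interior_subset hx
      have hd := (h x hx').1
      have ht : HasDerivWithinAt (fun s => (γ s).1) (γ' x).1 (Set.Icc (0:ℝ) 1) x := by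
        simpa [Function.comp_def] using (ContinuousLinearMap.fst ℝ ℝ ℝ).hasFDerivAt.comp_hasDerivWithinAt x hd
      have hx2 : HasDerivWithinAt (fun s => (γ s).2) (γ' x).2 (Set.Icc (0:ℝ) 1) x := by
        simpa [Function.comp_def] using (ContinuousLinearMap.snd ℝ ℝ ℝ).hasFDerivAt.comp_hasDerivWithinAt x hd
      exact (ht.add (hx2.const_mul c)).mono interior_subset
    · intro x hx
      have hx' : x ∈ Set.Icc (0:ℝ) 1 := interior_subset hx
      have h2 := (h x hx').2
      have : |c * (γ' x).2| ≤ |(γ' x).2| := by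
        rw [abs_mul]
        calc |c| * |(γ' x).2| ≤ 1 * |(γ' x).2| :=
          mul_le_mul_of_nonneg_right hc (abs_nonneg _)
        _ = |(γ' x).2| := one_mul _
      have := neg_abs_le (c * (γ' x).2)
      nlinarith [abs_nonneg (c * (γ' x).2), neg_abs_le (c * (γ' x).2)]
  have hA := hmono 1 (by norm_num) h0 h1 (by norm_num)
  have hB := hmono (-1) (by norm_num) h0 h1 (by norm_num)
  simp only [one_mul, neg_one_mul] at hA hB
  rw [gt_iff_lt, abs_lt]
  constructor <;> linarith

/-- Explicit timelike curve from `p` to `q` with a quadratic bump of size `ε`. -/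
lemma construct (p q : ℝ × ℝ) (ε : ℝ) (hε0 : 0 ≤ ε)
    (hε : |q.2 - p.2| + ε < q.1 - p.1) :
    ∃ γ γ' : ℝ → ℝ × ℝ, IsFDTimelike γ γ' ∧ γ 0 = p ∧ γ 1 = q ∧
      ∀ s : ℝ, γ s = (p.1 + s * (q.1 - p.1), p.2 + s * (q.2 - p.2) + ε * (s * (1 - s))) := by
  set c := q.1 - p.1 with hc
  set d := q.2 - p.2 with hd
  refine ⟨fun s => (p.1 + s * c, p.2 + s * d + ε * (s * (1 - s))),
    fun s => (c, d + ε * (1 - 2 * s)), ?_, by simp, by simp [hc, hd], fun s => rfl⟩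
  intro s hs
  constructor
  · have h1 : HasDerivAt (fun s : ℝ => p.1 + s * c) c s := by
      simpa using ((hasDerivAt_id s).mul_const c).const_add p.1
    have h2 : HasDerivAt (fun s : ℝ => p.2 + s * d + ε * (s * (1 - s)))
        (d + ε * (1 - 2 * s)) s := by
      have hq : HasDerivAt (fun s : ℝ => s * (1 - s)) (1 - 2 * s) s := by
        have := (hasDerivAt_id s).mul ((hasDerivAt_const s (1:ℝ)).sub (hasDerivAt_id s))
        exact this.congr_deriv (by simp only [id, Pi.sub_apply]; ring)
      have := (((hasDerivAt_id s).mul_const d).const_add p.2).add (hq.const_mul ε)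
      exact this.congr_deriv (by ring)
    exact (h1.prodMk h2).hasDerivWithinAt
  · have hs1 : |1 - 2 * s| ≤ 1 := by
      rw [abs_le]; constructor <;> [linarith [hs.2]; linarith [hs.1]]
    calc |d + ε * (1 - 2 * s)| ≤ |d| + |ε * (1 - 2 * s)| := abs_add_le _ _
      _ ≤ |d| + ε := by
          rw [abs_mul, abs_of_nonneg hε0]
          nlinarith
      _ < c := hε

lemma mem_Iplus_Mdel {p q : ℝ × ℝ} (hp : p ≠ ((0:ℝ), (0:ℝ))) (hq : q ≠ ((0:ℝ), (0:ℝ)))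
    (h : q.1 - p.1 > |q.2 - p.2|) : q ∈ Iplus Mdel p := by
  set c := q.1 - p.1 with hc
  set d := q.2 - p.2 with hd
  have hc0 : 0 < c := lt_of_le_of_lt (abs_nonneg d) h
  by_cases hseg : ∃ s ∈ Set.Icc (0:ℝ) 1, p.1 + s * c = 0 ∧ p.2 + s * d = 0
  · obtain ⟨s₀, hs₀, he1, he2⟩ := hseg
    have hs₀0 : s₀ ≠ 0 := by
      rintro rfl
      apply hp
      have h1 : p.1 = 0 := by linarith [he1]; 
      have h2 : p.2 = 0 := by linarith [he2]
      exact Prod.ext h1 h2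
    have hs₀1 : s₀ ≠ 1 := by
      rintro rfl
      apply hq
      have h1 : q.1 = 0 := by simp [hc] at he1; linarith
      have h2 : q.2 = 0 := by simp [hd] at he2; linarith
      exact Prod.ext h1 h2
    set ε := (c - |d|) / 2 with hε
    have hε0 : 0 < ε := by simp [hε]; linarith
    obtain ⟨γ, γ', hT, h0, h1, hform⟩ := construct p q ε (le_of_lt hε0) (by simp [hε]; linarith)
    refine ⟨hq, γ, γ', hT, h0, h1, fun s hs => ?_⟩
    simp only [Mdel, Set.mem_compl_iff, Set.mem_singleton_iff]
    rw [hform s]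
    intro habs
    have hA : p.1 + s * c = 0 := congrArg Prod.fst habs
    have hB : p.2 + s * d + ε * (s * (1 - s)) = 0 := congrArg Prod.snd habs
    have hss : s = s₀ := by
      have : (s - s₀) * c = 0 := by linarith
      rcases mul_eq_zero.1 this with h' | h'
      · linarith
      · exact absurd h' (ne_of_gt hc0)
    subst hss
    have hpos : 0 < ε * (s * (1 - s)) := by
      have h1 : 0 < s := lt_of_le_of_ne hs₀.1 (Ne.symm hs₀0)
      have h2 : s < 1 := lt_of_le_of_ne hs₀.2 hs₀1
      exact mul_pos hε0 (mul_pos h1 (by linarith))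
    linarith
  · obtain ⟨γ, γ', hT, h0, h1, hform⟩ := construct p q 0 le_rfl (by simpa using h)
    refine ⟨hq, γ, γ', hT, h0, h1, fun s hs => ?_⟩
    simp only [Mdel, Set.mem_compl_iff, Set.mem_singleton_iff]
    rw [hform s]
    intro habs
    exact hseg ⟨s, hs, by simpa using congrArg Prod.fst habs,
      by have := congrArg Prod.snd habs; simpa using this⟩

/-- in `M = ℝ² \ {(0,0)}`, `q ∈ I⁺_M(p)` iff `q.t − p.t > |q.x − p.x|`;
in particular `I⁺_M(p) = I⁺(p) ∩ M`. -/
theorem stmt12 (p : ℝ × ℝ) (hp : p ∈ Mdel) :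
    (∀ q ∈ Mdel, (q ∈ Iplus Mdel p ↔ q.1 - p.1 > |q.2 - p.2|)) ∧
    Iplus Mdel p = Iplus Set.univ p ∩ Mdel := by
  
  have hp' : p ≠ ((0:ℝ), (0:ℝ)) := by simpa [Mdel] using hp
  constructor
  · intro q hq
    have hq' : q ≠ ((0:ℝ), (0:ℝ)) := by simpa [Mdel] using hq
    constructor
    · rintro ⟨_, γ, γ', hT, h0, h1, _⟩
      have := timelike_ineq hT
      rw [h0, h1] at this
      exact this
    · exact fun h => mem_Iplus_Mdel hp' hq' h
  · ext q
    constructor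
    · rintro ⟨hqM, γ, γ', hT, h0, h1, _⟩
      exact ⟨⟨Set.mem_univ q, γ, γ', hT, h0, h1, fun s _ => Set.mem_univ _⟩, hqM⟩
    · rintro ⟨⟨_, γ, γ', hT, h0, h1, _⟩, hqM⟩
      have hineq := timelike_ineq hT
      rw [h0, h1] at hineq
      exact mem_Iplus_Mdel hp' (by simpa [Mdel] using hqM) hineq
end

section
/- Let M = ℝ² \ {(0,0)} be two-dimensional Minkowski spacetime with a point removed. Then M is distinguishing: for all points p, q ∈ M, if I⁺_M(p) = I⁺_M(q) or I⁻_M(p) = I⁻_M(q), then p = q. -/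
open Set Filter

/-- Monotonicity along a curve of a linear functional that is positive on the derivative. -/
lemma mono_aux (γ γ' : ℝ → ℝ × ℝ) (L : (ℝ × ℝ) →L[ℝ] ℝ)
    (h : ∀ s ∈ Set.Icc (0:ℝ) 1, HasDerivWithinAt γ (γ' s) (Set.Icc (0:ℝ) 1) s)
    (hpos : ∀ s ∈ Set.Icc (0:ℝ) 1, 0 < L (γ' s)) :
    L (γ 0) < L (γ 1) := by
  have hd : ∀ s ∈ Set.Icc (0:ℝ) 1,
      HasDerivWithinAt (fun u => L (γ u)) (L (γ' s)) (Set.Icc (0:ℝ) 1) s :=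
    fun s hs => (L.hasFDerivAt.comp_hasDerivWithinAt s (h s hs))
  have hmono : StrictMonoOn (fun u => L (γ u)) (Set.Icc (0:ℝ) 1) := by
    apply strictMonoOn_of_deriv_pos (convex_Icc 0 1)
    · exact fun s hs => (hd s hs).continuousWithinAt
    · intro s hs
      rw [interior_Icc] at hs
      have h' : HasDerivAt (fun u => L (γ u)) (L (γ' s)) s :=
        (hd s (Set.mem_Icc_of_Ioo hs)).hasDerivAt (Icc_mem_nhds hs.1 hs.2)
      rw [h'.deriv]
      exact hpos s (Set.mem_Icc_of_Ioo hs)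
  exact hmono (Set.left_mem_Icc.2 zero_le_one) (Set.right_mem_Icc.2 zero_le_one) zero_lt_one

/-- A timelike curve forces its endpoints to be chronologically related. -/
lemma timelike_cone {γ γ' : ℝ → ℝ × ℝ} (h : IsFDTimelike γ γ') {p q : ℝ × ℝ}
    (h0 : γ 0 = p) (h1 : γ 1 = q) : |q.2 - p.2| < q.1 - p.1 := by
  have hf := mono_aux γ γ' (ContinuousLinearMap.fst ℝ ℝ ℝ - ContinuousLinearMap.snd ℝ ℝ ℝ)
    (fun s hs => (h s hs).1) (fun s hs => by
      have h2 := (h s hs).2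
      have := abs_lt.1 h2
      simp only [ContinuousLinearMap.sub_apply, ContinuousLinearMap.coe_fst',
        ContinuousLinearMap.coe_snd']
      linarith [this.1, this.2])
  have hg := mono_aux γ γ' (ContinuousLinearMap.fst ℝ ℝ ℝ + ContinuousLinearMap.snd ℝ ℝ ℝ)
    (fun s hs => (h s hs).1) (fun s hs => by
      have h2 := (h s hs).2
      have := abs_lt.1 h2
      simp only [ContinuousLinearMap.add_apply, ContinuousLinearMap.coe_fst',
        ContinuousLinearMap.coe_snd']
      linarith [this.1, this.2])
  simp only [ContinuousLinearMap.sub_apply, ContinuousLinearMap.add_apply,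
    ContinuousLinearMap.coe_fst', ContinuousLinearMap.coe_snd', h0, h1] at hf hg
  rw [abs_lt]
  constructor <;> linarith

/-- Conversely, chronologically related points (both different from the origin) are joined by
a timelike curve avoiding the origin. -/
lemma exists_curve {p q : ℝ × ℝ} (hp : p ≠ ((0:ℝ),(0:ℝ))) (hq : q ≠ ((0:ℝ),(0:ℝ)))
    (hcone : |q.2 - p.2| < q.1 - p.1) :
    ∃ γ γ' : ℝ → ℝ × ℝ, IsFDTimelike γ γ' ∧ γ 0 = p ∧ γ 1 = q ∧
      ∀ s ∈ Set.Icc (0:ℝ) 1, γ s ∈ Mdel := by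
  set δ : ℝ := (q.1 - p.1) - |q.2 - p.2| with hδdef
  have hδ : 0 < δ := by simp [hδdef]; linarith
  set Γ : ℝ → ℝ → ℝ × ℝ := fun c s =>
    (p.1 + s * (q.1 - p.1), p.2 + s * (q.2 - p.2) + c * (s * (1 - s))) with hΓdef
  set Γ' : ℝ → ℝ → ℝ × ℝ := fun c s =>
    (q.1 - p.1, (q.2 - p.2) + c * (1 - 2 * s)) with hΓ'def
  have hder : ∀ c s, HasDerivAt (Γ c) (Γ' c s) s := by
    intro c s
    apply HasDerivAt.prodMk
    · simpa using ((hasDerivAt_id s).mul_const (q.1 - p.1)).const_add p.1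
    · have h1 : HasDerivAt (fun s : ℝ => p.2 + s * (q.2 - p.2)) (q.2 - p.2) s := by
        simpa using ((hasDerivAt_id s).mul_const (q.2 - p.2)).const_add p.2
      have h2 : HasDerivAt (fun s : ℝ => s * (1 - s)) (1 - 2 * s) s := by
        have := (hasDerivAt_id s).mul ((hasDerivAt_id s).const_sub 1)
        refine this.congr_deriv ?_
        simp only [id]
        ring
      exact h1.add ((h2.const_mul c))
  have hend0 : ∀ c, Γ c 0 = p := by intro c; simp [hΓdef]
  have hend1 : ∀ c, Γ c 1 = q := by
    intro c
    simp only [hΓdef]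
    have : p.1 + 1 * (q.1 - p.1) = q.1 := by ring
    have h2 : p.2 + 1 * (q.2 - p.2) + c * (1 * (1 - 1)) = q.2 := by ring
    rw [this, h2]
  have htl : ∀ c, 0 ≤ c → c < δ → IsFDTimelike (Γ c) (Γ' c) := by
    intro c hc0 hcδ s hs
    refine ⟨(hder c s).hasDerivWithinAt, ?_⟩
    simp only [hΓ'def]
    have habs : |1 - 2 * s| ≤ 1 := by
      rw [abs_le]; constructor <;> [linarith [hs.2]; linarith [hs.1]]
    calc |q.2 - p.2 + c * (1 - 2 * s)| ≤ |q.2 - p.2| + |c * (1 - 2 * s)| := abs_add_le _ _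
      _ = |q.2 - p.2| + c * |1 - 2 * s| := by rw [abs_mul, abs_of_nonneg hc0]
      _ ≤ |q.2 - p.2| + c * 1 := by nlinarith
      _ < q.1 - p.1 := by simp [hδdef] at hcδ ⊢; linarith
  have hgood : ∃ c, 0 ≤ c ∧ c < δ ∧ ∀ s ∈ Set.Icc (0:ℝ) 1, Γ c s ≠ ((0:ℝ),(0:ℝ)) := by
    by_cases H : ∀ s ∈ Set.Icc (0:ℝ) 1, Γ (δ/2) s ≠ ((0:ℝ),(0:ℝ))
    · exact ⟨δ/2, by linarith, by linarith, H⟩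
    · push_neg at H
      obtain ⟨s, hs, hzero⟩ := H
      refine ⟨δ/4, by linarith, by linarith, ?_⟩
      intro s' _ hzero'
      rw [hΓdef, Prod.ext_iff] at hzero hzero'
      obtain ⟨hz1, hz2⟩ := hzero
      obtain ⟨hz1', hz2'⟩ := hzero'
      simp only at hz1 hz2 hz1' hz2'
      have hA : q.1 - p.1 ≠ 0 := by
        have : (0:ℝ) ≤ |q.2 - p.2| := abs_nonneg _
        intro h; rw [h] at hcone; linarith
      have hss' : s = s' := by
        have : s * (q.1 - p.1) = s' * (q.1 - p.1) := by linarith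
        exact mul_right_cancel₀ hA this
      subst hss'
      have hkey : (δ/2 - δ/4) * (s * (1 - s)) = 0 := by linarith
      have hne : δ/2 - δ/4 ≠ 0 := by intro h; linarith
      have hs01 : s * (1 - s) = 0 := by
        rcases mul_eq_zero.1 hkey with h | h
        · exact absurd h hne
        · exact h
      rcases mul_eq_zero.1 hs01 with h | h
      · subst h
        apply hp
        have := hend0 (δ/2)
        rw [hΓdef] at this
        rw [← this, Prod.ext_iff]
        exact ⟨hz1, hz2⟩
      · have hs1 : s = 1 := by linarith
        subst hs1
        apply hq
        have := hend1 (δ/2)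
        rw [hΓdef] at this
        rw [← this, Prod.ext_iff]
        exact ⟨hz1, hz2⟩
  obtain ⟨c, hc0, hcδ, hcavoid⟩ := hgood
  exact ⟨Γ c, Γ' c, htl c hc0 hcδ, hend0 c, hend1 c,
    fun s hs => by simpa [Mdel] using hcavoid s hs⟩

/-- Characterization of the chronological future in `Mdel`. -/
lemma mem_Iplus_iff {p : ℝ × ℝ} (hp : p ≠ ((0:ℝ),(0:ℝ))) (q : ℝ × ℝ) :
    q ∈ Iplus Mdel p ↔ q ≠ ((0:ℝ),(0:ℝ)) ∧ |q.2 - p.2| < q.1 - p.1 := by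
  constructor
  · rintro ⟨hqM, γ, γ', htl, h0, h1, -⟩
    exact ⟨by simpa [Mdel] using hqM, timelike_cone htl h0 h1⟩
  · rintro ⟨hq, hcone⟩
    obtain ⟨γ, γ', htl, h0, h1, hM⟩ := exists_curve hp hq hcone
    exact ⟨by simpa [Mdel] using hq, γ, γ', htl, h0, h1, hM⟩

/-- Characterization of the chronological past in `Mdel`. -/
lemma mem_Iminus_iff {p : ℝ × ℝ} (hp : p ≠ ((0:ℝ),(0:ℝ))) (q : ℝ × ℝ) :
    q ∈ Iminus Mdel p ↔ q ≠ ((0:ℝ),(0:ℝ)) ∧ |p.2 - q.2| < p.1 - q.1 := by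
  constructor
  · rintro ⟨hqM, γ, γ', htl, h0, h1, -⟩
    exact ⟨by simpa [Mdel] using hqM, timelike_cone htl h0 h1⟩
  · rintro ⟨hq, hcone⟩
    obtain ⟨γ, γ', htl, h0, h1, hM⟩ := exists_curve hq hp hcone
    exact ⟨by simpa [Mdel] using hq, γ, γ', htl, h0, h1, hM⟩

lemma half_lemma (p q : ℝ × ℝ)
    (h : ∀ r : ℝ × ℝ, r ≠ ((0:ℝ),(0:ℝ)) → |r.2 - p.2| < r.1 - p.1 → |r.2 - q.2| < r.1 - q.1) :
    |p.2 - q.2| ≤ p.1 - q.1 := by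
  by_contra hlt
  push_neg at hlt
  set d : ℝ := |p.2 - q.2| with hd
  set e : ℝ := (d - (p.1 - q.1)) / 2 with he
  have he0 : 0 < e := by simp [he]; linarith
  have hgood : ∃ ε : ℝ, 0 < ε ∧ ε ≤ e ∧ ((p.1 + ε, p.2) : ℝ × ℝ) ≠ ((0:ℝ),(0:ℝ)) := by
    by_cases H : ((p.1 + e, p.2) : ℝ × ℝ) ≠ ((0:ℝ),(0:ℝ))
    · exact ⟨e, he0, le_refl _, H⟩
    · push_neg at H
      refine ⟨e/2, by linarith, by linarith, ?_⟩
      intro H2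
      rw [Prod.ext_iff] at H H2
      have := H.1
      have := H2.1
      simp only at *
      linarith
  obtain ⟨ε, hε0, hεe, hne⟩ := hgood
  have h1 : |(p.1 + ε, p.2).2 - p.2| < (p.1 + ε, p.2).1 - p.1 := by
    simp; linarith
  have h2 := h _ hne h1
  simp only at h2
  -- h2 : |p.2 - q.2| < p.1 + ε - q.1
  have : d < p.1 + ε - q.1 := by rw [hd]; exact h2
  simp [he] at hεe
  linarith

lemma cones_eq (p q : ℝ × ℝ)
    (h : ∀ r : ℝ × ℝ, r ≠ ((0:ℝ),(0:ℝ)) →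
      (|r.2 - p.2| < r.1 - p.1 ↔ |r.2 - q.2| < r.1 - q.1)) : p = q := by
  have h1 := half_lemma p q (fun r hr hcone => (h r hr).1 hcone)
  have h2 := half_lemma q p (fun r hr hcone => (h r hr).2 hcone)
  rw [abs_sub_comm] at h2
  have habs : |p.2 - q.2| = 0 := le_antisymm (by linarith) (abs_nonneg _)
  have h22 : p.2 = q.2 := by
    have := abs_eq_zero.1 habs; linarith
  have h11 : p.1 = q.1 := by
    rw [habs] at h1 h2; linarith
  exact Prod.ext h11 h22

/-- `M = ℝ² \ {(0,0)}` is distinguishing. -/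
theorem stmt16 (p q : ℝ × ℝ) (hp : p ∈ Mdel) (hq : q ∈ Mdel)
    (h : Iplus Mdel p = Iplus Mdel q ∨ Iminus Mdel p = Iminus Mdel q) :
    p = q := by
  have hp' : p ≠ ((0:ℝ),(0:ℝ)) := by simpa [Mdel] using hp
  have hq' : q ≠ ((0:ℝ),(0:ℝ)) := by simpa [Mdel] using hq
  rcases h with h | h
  · apply cones_eq p q
    intro r hr
    have := Set.ext_iff.1 h r
    rw [mem_Iplus_iff hp' r, mem_Iplus_iff hq' r] at this
    constructor
    · intro hc; exact (this.1 ⟨hr, hc⟩).2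
    · intro hc; exact (this.2 ⟨hr, hc⟩).2
  · have key : ∀ r : ℝ × ℝ, r ≠ ((0:ℝ),(0:ℝ)) →
        (|p.2 - r.2| < p.1 - r.1 ↔ |q.2 - r.2| < q.1 - r.1) := by
      intro r hr
      have := Set.ext_iff.1 h r
      rw [mem_Iminus_iff hp' r, mem_Iminus_iff hq' r] at this
      constructor
      · intro hc; exact (this.1 ⟨hr, hc⟩).2
      · intro hc; exact (this.2 ⟨hr, hc⟩).2
    have hpq : ((-p.1, p.2) : ℝ × ℝ) = ((-q.1, q.2) : ℝ × ℝ) := by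
      apply cones_eq
      intro r' hr'
      have hrne : ((-r'.1, r'.2) : ℝ × ℝ) ≠ ((0:ℝ),(0:ℝ)) := by
        intro hc
        apply hr'
        rw [Prod.ext_iff] at hc ⊢
        simp only at hc ⊢
        exact ⟨by linarith [hc.1], hc.2⟩
      have := key ((-r'.1, r'.2)) hrne
      simp only at this ⊢
      rw [abs_sub_comm p.2 r'.2, abs_sub_comm q.2 r'.2] at this
      constructor
      · intro hc
        have := this.1 (by linarith)
        linarith
      · intro hc
        have := this.2 (by linarith)
        linarith
    rw [Prod.ext_iff] at hpq ⊢
    simp only at hpq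
    exact ⟨by linarith [hpq.1], hpq.2⟩
end
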